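/- Entropy stability of the SBP CPR method on a periodic mesh (Theorem 1): consider N ≥ 1 elements indexed cyclically by e ∈ ℤ/Nℤ, where element e carries nodal vectors u^e_0, …, u^e_M ∈ ℝ^{p+1}, at the interface between elements e and e+1 a common numerical flux g^e ∈ ℝ^{M+1} is given, and the boundary flux vector of element e is f^{num,e}_k = (g^{e−1}_k, g^e_k) ∈ ℝ² (left boundary value, right boundary value). Write w^{e,L}_k = (R·u^e_k)_1 and w^{e,R}_k = (R·u^e_k)_2 for the boundary traces. Suppose every interface flux is entropy stable in the sense of Tadmor: for every e, Σ_{k=0}^{M} ( w^{e+1,L}_k − w^{e,R}_k )·g^e_k ≤ ψ(w^{e+1,L}) − ψ(w^{e,R}), with ψ(u) = (1/6)·Σ_{i,j,k} c_{ijk} u_i u_j u_k. Then the total discrete L² energy is nonincreasing: Σ_{e} Σ_{k=0}^{M} (u^e_k)ᵀ·P·RHS^e_k ≤ 0, where RHS^e_k is the semidiscrete right-hand side of element e formed with fluxes f^{num,e}. -/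

import Mathlib

/-!
Pairing `RHS_k` with `u_kᵀ P` and summing over `k`, the symmetry of `c` pairs the two halves of
the split-form volume term into the quadratic form of `P D + Dᵀ P`, which the SBP property turns
into a boundary term; the 1/3-weighted surface correction cancels it exactly. What remains on one
element is `(Σ_k w^L_k f^L_k - ψ(w^L)) - (Σ_k w^R_k f^R_k - ψ(w^R))`. On the periodic mesh the
left part of element `e+1` and the right part of element `e` share the interface flux `g^e`, and
Tadmor's condition says precisely that the former is at most the latter.
-/

open Matrix

theorem sum_sub_nonpos_of_perm_le {G α : Type*} [Fintype G] [AddCommGroup α] [PartialOrder α]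
    [IsOrderedAddMonoid α] (σ : Equiv.Perm G) (a b : G → α) (h : ∀ e, a (σ e) ≤ b e) :
    ∑ e, (a e - b e) ≤ 0 := by
  rw [Finset.sum_sub_distrib, sub_nonpos, ← Equiv.sum_comp σ a]
  exact Finset.sum_le_sum fun e _ => h e

section TripleSums

variable {ι α : Type*} [Fintype ι]

theorem sum_sum_sum_rotate [AddCommMonoid α] (F : ι → ι → ι → α) :
    ∑ k, ∑ i, ∑ j, F i j k = ∑ i, ∑ j, ∑ k, F i j k := by
  rw [Finset.sum_comm]
  exact Finset.sum_congr rfl fun _ _ => Finset.sum_comm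

theorem sum_sum_sum_cyclic [NonUnitalNonAssocSemiring α] {c : ι → ι → ι → α}
    (hc : ∀ i j k, c i j k = c j k i) (F : ι → ι → ι → α) :
    ∑ k, ∑ i, ∑ j, c i j k * F j k i = ∑ k, ∑ i, ∑ j, c i j k * F i j k := by
  rw [sum_sum_sum_rotate]
  simp_rw [← hc]

end TripleSums

section SplitForm

variable {𝕜 n m ι : Type*} [Field 𝕜] [Fintype n] [DecidableEq n] [Fintype m] [Fintype ι]

omit [DecidableEq n] in
theorem dotProduct_transpose_mul_mulVec {o : Type*} [Fintype o] (R : Matrix m n 𝕜)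
    (X : Matrix m o 𝕜) (a : n → 𝕜) (x : o → 𝕜) :
    a ⬝ᵥ (Rᵀ * X) *ᵥ x = (R *ᵥ a) ⬝ᵥ X *ᵥ x := by
  rw [← mulVec_mulVec, dotProduct_mulVec, vecMul_transpose]

omit [DecidableEq n] in
theorem dotProduct_mulVec_add_swap_of_sbp {P D : Matrix n n 𝕜} {R : Matrix m n 𝕜}
    {B : Matrix m m 𝕜} (hP : Pᵀ = P) (hSBP : P * D + Dᵀ * P = Rᵀ * B * R) (a b : n → 𝕜) :
    a ⬝ᵥ (P * D) *ᵥ b + b ⬝ᵥ (P * D) *ᵥ a = (R *ᵥ a) ⬝ᵥ B *ᵥ (R *ᵥ b) := by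
  have hswap : b ⬝ᵥ (P * D) *ᵥ a = a ⬝ᵥ (Dᵀ * P) *ᵥ b := by
    rw [dotProduct_mulVec, ← mulVec_transpose, transpose_mul, hP, dotProduct_comm]
  rw [hswap, ← dotProduct_add, ← add_mulVec, hSBP, Matrix.mul_assoc,
    dotProduct_transpose_mul_mulVec, mulVec_mulVec]

theorem dotProduct_diagonal_mul_mulVec (X : Matrix n n 𝕜) (a b x : n → 𝕜) :
    a ⬝ᵥ (diagonal b * X) *ᵥ x = (b * a) ⬝ᵥ X *ᵥ x := by
  simp only [← mulVec_mulVec, dotProduct, mulVec_diagonal, Pi.mul_apply]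
  exact Finset.sum_congr rfl fun i _ => by ring

-- The paper's `RHS_k`, for nodal vectors `v` and boundary numerical fluxes `f`.
noncomputable def splitFormRHS (c : ι → ι → ι → 𝕜) (P D : Matrix n n 𝕜) (R : Matrix m n 𝕜)
    (B : Matrix m m 𝕜) (v : ι → n → 𝕜) (f : ι → m → 𝕜) (k : ι) : n → 𝕜 :=
  -((1/3 : 𝕜) • ∑ i, ∑ j, c i j k •
      (D *ᵥ (v i * v j) + (P⁻¹ * diagonal (v j) * P * D) *ᵥ v i))
  - (P⁻¹ * Rᵀ * B) *ᵥ (f k - ∑ i, ∑ j, c i j k •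
      ((1/3 : 𝕜) • R *ᵥ (v i * v j) + (1/6 : 𝕜) • (R *ᵥ v i * R *ᵥ v j)))

variable {c : ι → ι → ι → 𝕜} {P D : Matrix n n 𝕜} {R : Matrix m n 𝕜} {B : Matrix m m 𝕜}

theorem dotProduct_mulVec_splitFormRHS (hP : IsUnit P.det) (v : ι → n → 𝕜) (f : ι → m → 𝕜)
    (k : ι) :
    v k ⬝ᵥ P *ᵥ splitFormRHS c P D R B v f k
      = ∑ i, ∑ j, c i j k * (1/3 * ((R *ᵥ v k) ⬝ᵥ B *ᵥ R *ᵥ (v i * v j)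
            - (v k ⬝ᵥ (P * D) *ᵥ (v i * v j) + (v j * v k) ⬝ᵥ (P * D) *ᵥ v i))
          + 1/6 * (R *ᵥ v k) ⬝ᵥ B *ᵥ (R *ᵥ v i * R *ᵥ v j))
        - (R *ᵥ v k) ⬝ᵥ B *ᵥ f k := by
  simp only [splitFormRHS, mulVec_sub, mulVec_neg, mulVec_smul, mulVec_sum, mulVec_add,
    mulVec_mulVec, Matrix.mul_assoc, mul_nonsing_inv_cancel_left _ _ hP, dotProduct_sub,
    dotProduct_neg, dotProduct_smul, dotProduct_sum, dotProduct_add,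
    dotProduct_diagonal_mul_mulVec, dotProduct_transpose_mul_mulVec, smul_eq_mul]
  simp only [← mulVec_mulVec _ B R, Finset.mul_sum, mul_add, mul_sub, Finset.sum_add_distrib,
    Finset.sum_sub_distrib, mul_left_comm (c _ _ k)]
  ring

omit [DecidableEq n] in
theorem sum_sum_sum_volume_eq_boundary (hc : ∀ i j k, c i j k = c j k i) (hP : Pᵀ = P)
    (hSBP : P * D + Dᵀ * P = Rᵀ * B * R) (v : ι → n → 𝕜) :
    ∑ k, ∑ i, ∑ j, c i j k *
        (v k ⬝ᵥ (P * D) *ᵥ (v i * v j) + (v j * v k) ⬝ᵥ (P * D) *ᵥ v i)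
      = ∑ k, ∑ i, ∑ j, c i j k * (R *ᵥ v k) ⬝ᵥ B *ᵥ R *ᵥ (v i * v j) := by
  simp only [mul_add, Finset.sum_add_distrib]
  rw [sum_sum_sum_cyclic hc fun a b d => (v a * v b) ⬝ᵥ (P * D) *ᵥ v d]
  simp only [← Finset.sum_add_distrib, ← mul_add, dotProduct_mulVec_add_swap_of_sbp hP hSBP]

theorem sum_dotProduct_mulVec_splitFormRHS (hc : ∀ i j k, c i j k = c j k i) (hP : Pᵀ = P)
    (hPu : IsUnit P.det) (hSBP : P * D + Dᵀ * P = Rᵀ * B * R) (v : ι → n → 𝕜)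
    (f : ι → m → 𝕜) :
    ∑ k, v k ⬝ᵥ P *ᵥ splitFormRHS c P D R B v f k
      = 1/6 * ∑ k, ∑ i, ∑ j, c i j k * (R *ᵥ v k) ⬝ᵥ B *ᵥ (R *ᵥ v i * R *ᵥ v j)
        - ∑ k, (R *ᵥ v k) ⬝ᵥ B *ᵥ f k := by
  have hvol := sum_sum_sum_volume_eq_boundary hc hP hSBP v
  simp only [dotProduct_mulVec_splitFormRHS hPu, Finset.sum_sub_distrib, mul_add, mul_sub,
    Finset.sum_add_distrib, mul_left_comm (c _ _ _), ← Finset.mul_sum] at hvol ⊢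
  linear_combination (-1/3 : 𝕜) * hvol

end SplitForm

section

variable {𝕜 n ι : Type*} [Field 𝕜] [Fintype n] [DecidableEq n] [Fintype ι]

def fluxPotential (c : ι → ι → ι → 𝕜) (w : ι → 𝕜) : 𝕜 :=
  (1/6) * ∑ i, ∑ j, ∑ k, c i j k * w i * w j * w k

theorem dotProduct_diagonal_neg_one_one_mulVec (x y : Fin 2 → 𝕜) :
    x ⬝ᵥ diagonal ![(-1 : 𝕜), 1] *ᵥ y = x 1 * y 1 - x 0 * y 0 := by
  simp only [dotProduct, mulVec_diagonal, Fin.sum_univ_two, cons_val_zero, cons_val_one,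
    cons_val_fin_one]
  ring

theorem sum_dotProduct_mulVec_splitFormRHS_eq_sub {c : ι → ι → ι → 𝕜} {P D : Matrix n n 𝕜}
    {R : Matrix (Fin 2) n 𝕜} (hc : ∀ i j k, c i j k = c j k i) (hP : Pᵀ = P)
    (hPu : IsUnit P.det) (hSBP : P * D + Dᵀ * P = Rᵀ * diagonal ![(-1 : 𝕜), 1] * R)
    (v : ι → n → 𝕜) (f : ι → Fin 2 → 𝕜) :
    ∑ k, v k ⬝ᵥ P *ᵥ splitFormRHS c P D R (diagonal ![(-1 : 𝕜), 1]) v f k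
      = (∑ k, (R *ᵥ v k) 0 * f k 0 - fluxPotential c fun k => (R *ᵥ v k) 0)
        - (∑ k, (R *ᵥ v k) 1 * f k 1 - fluxPotential c fun k => (R *ᵥ v k) 1) := by
  have hpot (w : ι → 𝕜) :
      1/6 * ∑ k, ∑ i, ∑ j, c i j k * (w k * (w i * w j)) = fluxPotential c w := by
    rw [fluxPotential, sum_sum_sum_rotate]
    exact congrArg _ <| Finset.sum_congr rfl fun i _ => Finset.sum_congr rfl fun j _ =>
      Finset.sum_congr rfl fun k _ => by ring
  rw [sum_dotProduct_mulVec_splitFormRHS hc hP hPu hSBP]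
  simp only [dotProduct_diagonal_neg_one_one_mulVec, Pi.mul_apply, mul_sub,
    Finset.sum_sub_distrib, ← hpot]
  ring

end

open Matrix in
theorem stmt_14_general (p M N : ℕ) [NeZero N]
    (c : Fin (M+1) → Fin (M+1) → Fin (M+1) → ℝ)
    (hsymm₁ : ∀ i j k, c i j k = c j i k)
    (hsymm₂ : ∀ i j k, c i j k = c i k j)
    (P D : Matrix (Fin (p+1)) (Fin (p+1)) ℝ)
    (hP : P.PosDef)
    (R : Matrix (Fin 2) (Fin (p+1)) ℝ)
    (B : Matrix (Fin 2) (Fin 2) ℝ)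
    (hB : B = Matrix.diagonal ![(-1 : ℝ), 1])
    (hSBP : P * D + Dᵀ * P = Rᵀ * B * R)
    (ψ : (Fin (M+1) → ℝ) → ℝ)
    (hψ : ∀ u, ψ u = (1/6) * ∑ i, ∑ j, ∑ k, c i j k * u i * u j * u k)
    -- nodal coefficients on each element, interface fluxes, boundary flux vectors
    (u : ZMod N → Fin (M+1) → Fin (p+1) → ℝ)
    (g : ZMod N → Fin (M+1) → ℝ)
    (fnum : ZMod N → Fin (M+1) → Fin 2 → ℝ)
    (hfnum : ∀ e k, fnum e k = ![g (e-1) k, g e k])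
    -- boundary traces
    (wL wR : ZMod N → Fin (M+1) → ℝ)
    (hwL : ∀ e k, wL e k = R.mulVec (u e k) 0)
    (hwR : ∀ e k, wR e k = R.mulVec (u e k) 1)
    -- every interface flux is entropy stable in the sense of Tadmor
    (hES : ∀ e, ∑ k, (wL (e+1) k - wR e k) * g e k ≤ ψ (wL (e+1)) - ψ (wR e))
    -- semidiscrete right-hand sides
    (RHS : ZMod N → Fin (M+1) → Fin (p+1) → ℝ)
    (hRHS : ∀ e k, RHS e k =
      -((1/3 : ℝ) • ∑ i, ∑ j, c i j k •
          (D.mulVec (u e i * u e j)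
            + (P⁻¹ * Matrix.diagonal (u e j) * P * D).mulVec (u e i)))
      - (P⁻¹ * Rᵀ * B).mulVec (fnum e k - ∑ i, ∑ j, c i j k •
          ((1/3 : ℝ) • R.mulVec (u e i * u e j)
            + (1/6 : ℝ) • (R.mulVec (u e i) * R.mulVec (u e j))))) :
    ∑ e : ZMod N, ∑ k, (u e k) ⬝ᵥ P.mulVec (RHS e k) ≤ 0 := by
  subst hB
  obtain rfl : ψ = fluxPotential c := funext hψ
  obtain rfl : wL = fun e k => (R *ᵥ u e k) 0 := funext₂ hwL
  obtain rfl : wR = fun e k => (R *ᵥ u e k) 1 := funext₂ hwR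
  obtain rfl : RHS = fun e => splitFormRHS c P D R (diagonal ![(-1 : ℝ), 1]) (u e) (fnum e) :=
    funext₂ hRHS
  have hc (i j k) : c i j k = c j k i := (hsymm₁ i j k).trans (hsymm₂ j i k)
  have hPt : Pᵀ = P := (conjTranspose_eq_transpose_of_trivial P).symm.trans hP.1
  have hPu : IsUnit P.det := (isUnit_iff_isUnit_det P).mp hP.isUnit
  simp only [sum_dotProduct_mulVec_splitFormRHS_eq_sub hc hPt hPu hSBP, hfnum]
  refine sum_sub_nonpos_of_perm_le (Equiv.addRight 1) _ _ fun e => ?_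
  have h := hES e
  simp only [sub_mul, Finset.sum_sub_distrib] at h
  simp only [Equiv.coe_addRight, add_sub_cancel_right, Matrix.cons_val_zero, Matrix.cons_val_one]
  linarith

open Matrix in
/-- Entropy stability of the SBP CPR method on a periodic mesh (Theorem 1):
if every interface flux is entropy stable in the sense of Tadmor, then the total
discrete L² energy is nonincreasing. -/
theorem stmt_14 (p M N : ℕ) [NeZero N]
    (c : Fin (M+1) → Fin (M+1) → Fin (M+1) → ℝ)
    (hsymm₁ : ∀ i j k, c i j k = c j i k)
    (hsymm₂ : ∀ i j k, c i j k = c i k j)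
    (P D : Matrix (Fin (p+1)) (Fin (p+1)) ℝ)
    (hP : P.PosDef)
    (hD : D.mulVec (fun _ => 1) = 0)
    (R : Matrix (Fin 2) (Fin (p+1)) ℝ)
    (hR : R.mulVec (fun _ => 1) = fun _ => 1)
    (B : Matrix (Fin 2) (Fin 2) ℝ)
    (hB : B = Matrix.diagonal ![(-1 : ℝ), 1])
    (hSBP : P * D + Dᵀ * P = Rᵀ * B * R)
    (ψ : (Fin (M+1) → ℝ) → ℝ)
    (hψ : ∀ u, ψ u = (1/6) * ∑ i, ∑ j, ∑ k, c i j k * u i * u j * u k)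
    -- nodal coefficients on each element, interface fluxes, boundary flux vectors
    (u : ZMod N → Fin (M+1) → Fin (p+1) → ℝ)
    (g : ZMod N → Fin (M+1) → ℝ)
    (fnum : ZMod N → Fin (M+1) → Fin 2 → ℝ)
    (hfnum : ∀ e k, fnum e k = ![g (e-1) k, g e k])
    -- boundary traces
    (wL wR : ZMod N → Fin (M+1) → ℝ)
    (hwL : ∀ e k, wL e k = R.mulVec (u e k) 0)
    (hwR : ∀ e k, wR e k = R.mulVec (u e k) 1)
    -- every interface flux is entropy stable in the sense of Tadmor
    (hES : ∀ e, ∑ k, (wL (e+1) k - wR e k) * g e k ≤ ψ (wL (e+1)) - ψ (wR e))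
    -- semidiscrete right-hand sides
    (RHS : ZMod N → Fin (M+1) → Fin (p+1) → ℝ)
    (hRHS : ∀ e k, RHS e k =
      -((1/3 : ℝ) • ∑ i, ∑ j, c i j k •
          (D.mulVec (u e i * u e j)
            + (P⁻¹ * Matrix.diagonal (u e j) * P * D).mulVec (u e i)))
      - (P⁻¹ * Rᵀ * B).mulVec (fnum e k - ∑ i, ∑ j, c i j k •
          ((1/3 : ℝ) • R.mulVec (u e i * u e j)
            + (1/6 : ℝ) • (R.mulVec (u e i) * R.mulVec (u e j))))) :
    ∑ e : ZMod N, ∑ k, (u e k) ⬝ᵥ P.mulVec (RHS e k) ≤ 0 :=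
  stmt_14_general p M N c hsymm₁ hsymm₂ P D hP R B hB hSBP ψ hψ u g fnum hfnum wL wR hwL hwR hES RHS
    hRHS
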